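/- (Theorem 1, finite-sample part.) In the two-task Gaussian model with any ρ ∈ [0, 1] (in particular ρ = 1/2), for any n ≥ 2, let (A^i_k, A^j_k, Y_{i,k}), k = 1, …, n, be i.i.d. copies of (A^i, A^j, Y_i). Then almost surely the empirical Gram matrix Σ̂ = (1/n)∑_k (A^i_k, A^j_k)(A^i_k, A^j_k)ᵀ is invertible and the unique empirical least-squares minimizer (ŵ₁, ŵ₂) = Σ̂^{−1}·v̂, with v̂ = (1/n)∑_k Y_{i,k}·(A^i_k, A^j_k), satisfies ŵ₂ ≠ 0; that is, the optimal classifier trained on finitely many samples places nonzero weight on the non-causal feature almost surely. -/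

import Mathlib

/-!
Conditionally on the labels, the features of the sample are the labels shifted by independent
Gaussian noise. The product of the determinant of the Gram matrix and the Cramer numerator of
`ŵ₂` is then a polynomial in the noise. It is not the zero polynomial: some choice of noise makes
the first two samples the two standard basis vectors and kills all the others, and there it
equals the nonzero label of the second sample. The zero set of a nonzero polynomial is null for
every product of absolutely continuous measures (induction on the number of variables, Fubini,
and finiteness of the roots of a one-variable polynomial). Off this null set the Gram matrix is
invertible, least squares has the unique solution `Σ̂⁻¹ v̂`, and its second coordinate is
nonzero by Cramer's rule.
-/

open MeasureTheory ProbabilityTheory Matrix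

namespace MvPolynomial

theorem measure_pi_setOf_eval_fin_eq_zero :
    ∀ {m : ℕ} {μ : Fin m → Measure ℝ} [∀ i, SigmaFinite (μ i)], (∀ i, μ i ≪ volume) →
      ∀ {p : MvPolynomial (Fin m) ℝ}, p ≠ 0 → Measure.pi μ {x | eval x p = 0} = 0
  | 0, μ, _, _, p, hp => by
    obtain ⟨c, rfl⟩ := C_surjective (Fin 0) p
    simp_all
  | m + 1, μ, _, hμ, p, hp => by
    let e := (MeasurableEquiv.piFinSuccAbove (fun _ : Fin (m + 1) => ℝ) 0).trans
      MeasurableEquiv.prodComm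
    have he : MeasurePreserving e.symm ((Measure.pi fun j => μ j.succ).prod (μ 0))
        (Measure.pi μ) :=
      MeasurePreserving.symm e
        (Measure.measurePreserving_swap.comp (measurePreserving_piFinSuccAbove μ 0))
    have hZ : MeasurableSet {x : Fin (m + 1) → ℝ | eval x p = 0} :=
      (isClosed_eq (continuous_eval p) continuous_const).measurableSet
    obtain ⟨k, hk⟩ : ∃ k, (finSuccEquiv ℝ m p).coeff k ≠ 0 := by
      by_contra! h
      exact hp ((finSuccEquiv ℝ m).injective (by ext1 k; simp [h k]))
    rw [← he.measure_preimage hZ.nullMeasurableSet,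
      Measure.measure_prod_null (e.symm.measurable hZ)]
    have hcoeff : ∀ᵐ s ∂(Measure.pi fun j => μ j.succ),
        eval s ((finSuccEquiv ℝ m p).coeff k) ≠ 0 :=
      ae_iff.mpr (by simpa using measure_pi_setOf_eval_fin_eq_zero (fun j => hμ j.succ) hk)
    filter_upwards [hcoeff] with s hs
    have hslice : Polynomial.map (eval s) (finSuccEquiv ℝ m p) ≠ 0 :=
      fun h => hs (by simpa using congrArg (Polynomial.coeff · k) h)
    refine hμ 0 (Set.Finite.measure_zero ?_ volume)
    convert Polynomial.finite_setOfPred_isRoot hslice using 1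
    ext y
    have hcons : e.symm (s, y) = Fin.cons y s := by
      simp only [e, MeasurableEquiv.trans_symm, MeasurableEquiv.trans_apply,
        MeasurableEquiv.piFinSuccAbove_symm_apply, Fin.insertNthEquiv_zero]
      rfl
    simp [hcons, eval_eq_eval_mv_eval']

theorem measure_pi_setOf_eval_eq_zero {ι : Type*} [Fintype ι] {μ : ι → Measure ℝ}
    [∀ i, SigmaFinite (μ i)] (hμ : ∀ i, μ i ≪ volume) {p : MvPolynomial ι ℝ} (hp : p ≠ 0) :
    Measure.pi μ {x | eval x p = 0} = 0 := by
  let e := (Fintype.equivFin ι).symm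
  have hZ : MeasurableSet {x : ι → ℝ | eval x p = 0} :=
    (isClosed_eq (continuous_eval p) continuous_const).measurableSet
  rw [← (measurePreserving_piCongrLeft μ e).measure_preimage hZ.nullMeasurableSet]
  convert measure_pi_setOf_eval_fin_eq_zero (fun i => hμ (e i))
    ((rename_injective _ e.symm.injective).ne_iff.mpr hp) using 2
  ext x
  simp only [MeasurableEquiv.piCongrLeft, Equiv.piCongrLeft, Equiv.symm_symm,
    Equiv.piCongrLeft'_symm, MeasurableEquiv.coe_mk, Set.preimage_ofPred_eq, Set.mem_ofPred_eq,
    eval_rename]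
  rfl

end MvPolynomial

section ProductMeasures

variable {ι α β γ : Type*} [Fintype ι] [MeasurableSpace α] [MeasurableSpace β]
  [MeasurableSpace γ]

theorem measurePreserving_pi_prod_of_sum (μ : Measure α) [SigmaFinite μ] :
    MeasurePreserving (fun (z : ι ⊕ ι → α) i => (z (.inl i), z (.inr i)))
      (Measure.pi fun _ => μ) (Measure.pi fun _ : ι => μ.prod μ) :=
  (measurePreserving_arrowProdEquivProdArrow α α ι (fun _ => μ) (fun _ => μ)).symm _ |>.comp
    (measurePreserving_sumPiEquivProdPi fun _ => μ)

theorem Measure.pi_map_prod_eq_zero {μ : Measure α} {ν : Measure β} [IsFiniteMeasure μ]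
    [IsFiniteMeasure ν] {g : α × β → γ} (hg : Measurable g) {s : Set (ι → γ)}
    (hs : MeasurableSet s)
    (h : ∀ᵐ x ∂(Measure.pi fun _ => μ),
      Measure.pi (fun _ => ν) {y | (fun i => g (x i, y i)) ∈ s} = 0) :
    Measure.pi (fun _ : ι => (μ.prod ν).map g) s = 0 := by
  have hpi : MeasurePreserving (fun (z : ι → α × β) i => g (z i))
      (Measure.pi fun _ => μ.prod ν) (Measure.pi fun _ => (μ.prod ν).map g) :=
    measurePreserving_pi _ _ fun _ => ⟨hg, rfl⟩
  have hprod := (measurePreserving_arrowProdEquivProdArrow α β ι (fun _ => μ) (fun _ => ν)).symm _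
  rw [← hpi.measure_preimage hs.nullMeasurableSet,
    ← hprod.measure_preimage (hpi.measurable hs).nullMeasurableSet,
    Measure.measure_prod_null (hprod.measurable (hpi.measurable hs))]
  exact h

end ProductMeasures

theorem ProbabilityTheory.iIndepFun.map_prodMk_prodMk_eq_prod {Ω β : Type*} [MeasurableSpace Ω]
    [MeasurableSpace β] {P : Measure Ω} {X₀ X₁ X₂ X₃ : Ω → β} (h₀ : Measurable X₀)
    (h₁ : Measurable X₁) (h₂ : Measurable X₂) (h₃ : Measurable X₃)
    (h : iIndepFun ![X₀, X₁, X₂, X₃] P) :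
    P.map (fun ω => ((X₀ ω, X₁ ω), (X₂ ω, X₃ ω))) =
      (P.map fun ω => (X₀ ω, X₁ ω)).prod ((P.map X₂).prod (P.map X₃)) := by
  have := h.isProbabilityMeasure
  have hm : ∀ i, Measurable (![X₀, X₁, X₂, X₃] i) := fun i => by
    fin_cases i <;> assumption
  have h01_23 : IndepFun (fun ω => (X₀ ω, X₁ ω)) (fun ω => (X₂ ω, X₃ ω)) P :=
    h.indepFun_prodMk_prodMk hm 0 1 2 3 (by decide) (by decide) (by decide) (by decide)
  have h23 : IndepFun X₂ X₃ P := h.indepFun (show (2 : Fin 4) ≠ 3 by decide)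
  rw [(indepFun_iff_map_prod_eq_prod_map_map (by fun_prop) (by fun_prop)).mp h01_23,
    (indepFun_iff_map_prod_eq_prod_map_map h₂.aemeasurable h₃.aemeasurable).mp h23]

namespace Matrix

variable {ι m : Type*} [Fintype ι] [Fintype m]

theorem residual_dotProduct_self_eq_add (X : Matrix ι m ℝ) (y : ι → ℝ) {w : m → ℝ}
    (hw : (Xᵀ * X) *ᵥ w = Xᵀ *ᵥ y) (u : m → ℝ) :
    (y - X *ᵥ u) ⬝ᵥ (y - X *ᵥ u) =
      (y - X *ᵥ w) ⬝ᵥ (y - X *ᵥ w) + (X *ᵥ (u - w)) ⬝ᵥ (X *ᵥ (u - w)) := by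
  have horth : (X *ᵥ (u - w)) ⬝ᵥ (y - X *ᵥ w) = 0 := by
    rw [dotProduct_comm, dotProduct_mulVec, ← mulVec_transpose, mulVec_sub, mulVec_mulVec, hw,
      sub_self, zero_dotProduct]
  have hsplit : y - X *ᵥ u = (y - X *ᵥ w) - X *ᵥ (u - w) := by
    rw [mulVec_sub]; abel
  rw [hsplit]
  generalize y - X *ᵥ w = r at horth ⊢
  simp only [sub_dotProduct, dotProduct_sub, dotProduct_comm r, horth]
  ring

theorem leastSquares_minimizer_iff [DecidableEq m] (X : Matrix ι m ℝ) (y : ι → ℝ)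
    (hX : IsUnit (Xᵀ * X)) (w : m → ℝ) :
    (∀ u, (y - X *ᵥ w) ⬝ᵥ (y - X *ᵥ w) ≤ (y - X *ᵥ u) ⬝ᵥ (y - X *ᵥ u)) ↔
      w = (Xᵀ * X)⁻¹ *ᵥ (Xᵀ *ᵥ y) := by
  set w₀ := (Xᵀ * X)⁻¹ *ᵥ (Xᵀ *ᵥ y)
  have hw₀ : (Xᵀ * X) *ᵥ w₀ = Xᵀ *ᵥ y := by
    rw [mulVec_mulVec, mul_nonsing_inv _ ((isUnit_iff_isUnit_det _).mp hX), one_mulVec]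
  have hnonneg (v : ι → ℝ) : 0 ≤ v ⬝ᵥ v := Finset.sum_nonneg fun i _ => mul_self_nonneg _
  refine ⟨fun hw => ?_, fun hw u => ?_⟩
  · have hzero : (X *ᵥ (w - w₀)) ⬝ᵥ (X *ᵥ (w - w₀)) = 0 := by
      have := hw w₀
      rw [residual_dotProduct_self_eq_add X y hw₀ w] at this
      exact le_antisymm (by linarith) (hnonneg _)
    rw [dotProduct_self_eq_zero] at hzero
    have hker : (Xᵀ * X) *ᵥ (w - w₀) = (Xᵀ * X) *ᵥ 0 := by
      rw [← mulVec_mulVec, hzero, mulVec_zero, mulVec_zero]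
    exact sub_eq_zero.mp (mulVec_injective_iff_isUnit.mpr hX hker)
  · rw [residual_dotProduct_self_eq_add X y hw₀ u, hw]
    exact le_add_of_nonneg_right (hnonneg _)

theorem inv_mulVec_apply_ne_zero_iff [DecidableEq m] (A : Matrix m m ℝ) (b : m → ℝ)
    (hA : A.det ≠ 0) (i : m) :
    (A⁻¹ *ᵥ b) i ≠ 0 ↔ (A.updateCol i b).det ≠ 0 := by
  rw [← cramer_apply, ← det_smul_inv_mulVec_eq_cramer A b (isUnit_iff_ne_zero.mpr hA)]
  simp [hA]

end Matrix

section Degeneracy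

variable {ι m R S : Type*} [Fintype ι] [Fintype m] [DecidableEq m] [CommRing R] [CommRing S]

/-- Over a field, by Cramer's rule, this is nonzero iff `Xᵀ X` is invertible and the `i`-th
coordinate of the least-squares solution `(Xᵀ X)⁻¹ Xᵀ y` is nonzero. -/
def leastSquaresDegeneracy (X : Matrix ι m R) (y : ι → R) (i : m) : R :=
  (Xᵀ * X).det * ((Xᵀ * X).updateCol i (Xᵀ *ᵥ y)).det

theorem RingHom.map_leastSquaresDegeneracy (f : R →+* S) (X : Matrix ι m R) (y : ι → R)
    (i : m) : f (leastSquaresDegeneracy X y i) = leastSquaresDegeneracy (X.map f) (f ∘ y) i := by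
  have hmom : f ∘ (Xᵀ *ᵥ y) = (X.map f)ᵀ *ᵥ (f ∘ y) := by
    ext j
    simp [RingHom.map_mulVec, transpose_map]
  simp [leastSquaresDegeneracy, RingHom.map_det, RingHom.mapMatrix_apply, Matrix.map_mul,
    transpose_map, map_updateCol, hmom]

theorem leastSquaresDegeneracy_of_embedding [DecidableEq ι] (e : m ↪ ι) (y : ι → R) (i : m) :
    leastSquaresDegeneracy (of fun k j => if k = e j then 1 else 0) y i = y (e i) := by
  set E : Matrix ι m R := of fun k j => if k = e j then 1 else 0
  have hgram : Eᵀ * E = 1 := by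
    ext j j'
    simp [E, mul_apply, one_apply, e.injective.eq_iff, eq_comm]
  have hmom : Eᵀ *ᵥ y = fun j => y (e j) := by
    ext j
    simp [E, mulVec, dotProduct]
  rw [leastSquaresDegeneracy, hgram, hmom, det_one, one_mul, ← cramer_apply, cramer_one]
  rfl

end Degeneracy

theorem empirical_leastSquares_of_degeneracy_ne_zero {n : ℕ} (hn : n ≠ 0) (A B Y : Fin n → ℝ)
    (hdeg : leastSquaresDegeneracy (of fun k => ![A k, B k]) Y 1 ≠ 0)
    (Sig : Matrix (Fin 2) (Fin 2) ℝ)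
    (hSig : Sig = (n : ℝ)⁻¹ • ∑ k : Fin n, of fun p q : Fin 2 => ![A k, B k] p * ![A k, B k] q)
    (v : Fin 2 → ℝ) (hv : v = (n : ℝ)⁻¹ • ∑ k : Fin n, Y k • ![A k, B k])
    (L : (Fin 2 → ℝ) → ℝ)
    (hL : ∀ w, L w = (n : ℝ)⁻¹ * ∑ k, (Y k - w 0 * A k - w 1 * B k) ^ 2) :
    IsUnit Sig ∧ (∀ w, (∀ u, L w ≤ L u) ↔ w = Sig⁻¹ *ᵥ v) ∧ (Sig⁻¹ *ᵥ v) 1 ≠ 0 := by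
  set X : Matrix (Fin n) (Fin 2) ℝ := of fun k => ![A k, B k]
  have hn' : (0 : ℝ) < n := by positivity
  have hdet : (Xᵀ * X).det ≠ 0 := left_ne_zero_of_mul hdeg
  have hunit : IsUnit (Xᵀ * X) := (isUnit_iff_isUnit_det _).mpr (isUnit_iff_ne_zero.mpr hdet)
  have hSig' : Sig = Units.mk0 _ (inv_ne_zero hn'.ne') • (Xᵀ * X) := by
    rw [hSig]; ext p q; simp [X, mul_apply, Matrix.sum_apply]
  have hv' : v = (n : ℝ)⁻¹ • (Xᵀ *ᵥ Y) := by
    rw [hv]; ext p; fin_cases p <;> simp [X, mulVec, dotProduct, Finset.sum_apply, mul_comm]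
  have hL' : ∀ w, L w = (n : ℝ)⁻¹ * ((Y - X *ᵥ w) ⬝ᵥ (Y - X *ᵥ w)) := by
    intro w; rw [hL]; congr 1; refine Finset.sum_congr rfl fun k _ => ?_
    simp only [X, Pi.sub_apply, mulVec, dotProduct, of_apply, Fin.sum_univ_two, cons_val_zero,
      cons_val_one, cons_val_fin_one]
    ring
  have hsol : Sig⁻¹ *ᵥ v = (Xᵀ * X)⁻¹ *ᵥ (Xᵀ *ᵥ Y) := by
    rw [hSig', hv', inv_smul' _ _ (isUnit_iff_ne_zero.mpr hdet)]
    simp [Units.smul_def, smul_mulVec, mulVec_smul, smul_smul, hn'.ne']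
  refine ⟨hSig' ▸ hunit.smul _, fun w => ?_, ?_⟩
  · simp only [hL', hsol, mul_le_mul_iff_right₀ (inv_pos.mpr hn')]
    exact leastSquares_minimizer_iff X Y hunit w
  · rw [hsol, inv_mulVec_apply_ne_zero_iff _ _ hdet]
    exact right_ne_zero_of_mul hdeg

/-- `((Yᵢ, S), (εᵢ, εⱼ)) ↦ (Aⁱ, Aʲ, Yᵢ)`. -/
def twoTaskSample (a b : ℝ) (z : (ℝ × ℝ) × (ℝ × ℝ)) : ℝ × ℝ × ℝ :=
  (a * z.1.1 + z.2.1, b * (z.1.2 * z.1.1) + z.2.2, z.1.1)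

theorem measurable_twoTaskSample (a b : ℝ) : Measurable (twoTaskSample a b) := by
  unfold twoTaskSample; fun_prop

theorem measurableSet_setOf_leastSquaresDegeneracy_eq_zero {n : ℕ} : MeasurableSet
    {x : Fin n → ℝ × ℝ × ℝ |
      leastSquaresDegeneracy (of fun k => ![(x k).1, (x k).2.1]) (fun k => (x k).2.2) 1 = 0} :=
  (isClosed_eq (by unfold leastSquaresDegeneracy; fun_prop) continuous_const).measurableSet

theorem exists_mvPolynomial_eval_eq_leastSquaresDegeneracy {n : ℕ} (hn : 2 ≤ n) (a b : ℝ)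
    (d : Fin n → ℝ × ℝ) (hd : ∀ k, (d k).1 ≠ 0) :
    ∃ q : MvPolynomial (Fin n ⊕ Fin n) ℝ, q ≠ 0 ∧ ∀ z, MvPolynomial.eval z q =
      leastSquaresDegeneracy
        (of fun k => ![a * (d k).1 + z (.inl k), b * ((d k).2 * (d k).1) + z (.inr k)])
        (fun k => (d k).1) 1 := by
  let Xp : Matrix (Fin n) (Fin 2) (MvPolynomial (Fin n ⊕ Fin n) ℝ) := of fun k =>
    ![.C (a * (d k).1) + .X (.inl k), .C (b * ((d k).2 * (d k).1)) + .X (.inr k)]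
  let q := leastSquaresDegeneracy Xp (fun k => .C (d k).1) 1
  have heval : ∀ z, MvPolynomial.eval z q = leastSquaresDegeneracy
      (of fun k => ![a * (d k).1 + z (.inl k), b * ((d k).2 * (d k).1) + z (.inr k)])
      (fun k => (d k).1) 1 := by
    intro z
    rw [RingHom.map_leastSquaresDegeneracy]
    congr 1
    · ext k j; fin_cases j <;> simp [Xp]
    · ext k; simp
  refine ⟨q, fun hq => ?_, heval⟩
  let e := Fin.castLEEmb hn
  let z₀ : Fin n ⊕ Fin n → ℝ := Sum.elim (fun k => (if k = e 0 then 1 else 0) - a * (d k).1)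
    (fun k => (if k = e 1 then 1 else 0) - b * ((d k).2 * (d k).1))
  have hX₀ : (of fun k => ![a * (d k).1 + z₀ (.inl k), b * ((d k).2 * (d k).1) + z₀ (.inr k)]
      : Matrix (Fin n) (Fin 2) ℝ) = of fun k j => if k = e j then 1 else 0 := by
    ext k j; fin_cases j <;> simp [z₀]
  have h₀ := heval z₀
  rw [hq, map_zero, hX₀, leastSquaresDegeneracy_of_embedding] at h₀
  exact hd (e 1) h₀.symm

theorem pi_map_twoTaskSample_degenerate_eq_zero {n : ℕ} (hn : 2 ≤ n) (a b : ℝ)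
    {ν : Measure (ℝ × ℝ)} [IsFiniteMeasure ν] (hν : ∀ᵐ d ∂ν, d.1 ≠ 0)
    {γ : Measure ℝ} [IsFiniteMeasure γ] (hγ : γ ≪ volume) :
    Measure.pi (fun _ : Fin n => (ν.prod (γ.prod γ)).map (twoTaskSample a b))
      {x | leastSquaresDegeneracy (of fun k => ![(x k).1, (x k).2.1]) (fun k => (x k).2.2) 1 = 0}
      = 0 := by
  set bad := {x : Fin n → ℝ × ℝ × ℝ |
    leastSquaresDegeneracy (of fun k => ![(x k).1, (x k).2.1]) (fun k => (x k).2.2) 1 = 0}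
  have hbad : MeasurableSet bad := measurableSet_setOf_leastSquaresDegeneracy_eq_zero
  refine Measure.pi_map_prod_eq_zero (measurable_twoTaskSample a b) hbad ?_
  have hlabels : ∀ᵐ d ∂(Measure.pi fun _ : Fin n => ν), ∀ k, (d k).1 ≠ 0 :=
    ae_all_iff.mpr fun k => (Measure.tendsto_eval_ae_ae (μ := fun _ => ν) (i := k)).eventually hν
  filter_upwards [hlabels] with d hd
  have hslice : MeasurableSet
      {y : Fin n → ℝ × ℝ | (fun k => twoTaskSample a b (d k, y k)) ∈ bad} :=
    hbad.preimage (measurable_pi_lambda _ fun k =>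
      (measurable_twoTaskSample a b).comp (measurable_const.prodMk (measurable_pi_apply k)))
  rw [← (measurePreserving_pi_prod_of_sum γ).measure_preimage hslice.nullMeasurableSet]
  obtain ⟨q, hq, heval⟩ := exists_mvPolynomial_eval_eq_leastSquaresDegeneracy hn a b d hd
  convert MvPolynomial.measure_pi_setOf_eval_eq_zero (fun _ => hγ) hq using 2
  ext z
  rw [Set.mem_ofPred_eq, heval]
  rfl

theorem stmt_14_general
    {Ω : Type*} [MeasurableSpace Ω] (P : Measure Ω) [IsProbabilityMeasure P]
    (Yi S εi εj : Ω → ℝ)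
    (hYim : Measurable Yi) (hSm : Measurable S)
    (hεim : Measurable εi) (hεjm : Measurable εj)
    (σ a b : ℝ) (hσ : 0 < σ)
    (hindep : iIndepFun ![Yi, S, εi, εj] P)
    (hYval : ∀ ω, Yi ω = 1 ∨ Yi ω = -1)
    (hεi : Measure.map εi P = gaussianReal 0 ⟨σ^2, sq_nonneg σ⟩)
    (hεj : Measure.map εj P = gaussianReal 0 ⟨σ^2, sq_nonneg σ⟩)
    (n : ℕ) (hn : 2 ≤ n)
    (Ai' Aj' Yi' : Fin n → Ω → ℝ)
    (hAi'm : ∀ k, Measurable (Ai' k)) (hAj'm : ∀ k, Measurable (Aj' k))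
    (hYi'm : ∀ k, Measurable (Yi' k))
    (hiid_indep : iIndepFun
      (fun k ω => (Ai' k ω, Aj' k ω, Yi' k ω)) P)
    (hiid_law : ∀ k, Measure.map (fun ω => (Ai' k ω, Aj' k ω, Yi' k ω)) P
      = Measure.map (fun ω => (a * Yi ω + εi ω, b * (S ω * Yi ω) + εj ω, Yi ω)) P)
    (Sighat : Ω → Matrix (Fin 2) (Fin 2) ℝ)
    (hSighat : ∀ ω, Sighat ω = (n : ℝ)⁻¹ •
      ∑ k : Fin n, Matrix.of fun p q : Fin 2 =>
        ![Ai' k ω, Aj' k ω] p * ![Ai' k ω, Aj' k ω] q)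
    (vhat : Ω → Fin 2 → ℝ)
    (hvhat : ∀ ω, vhat ω = (n : ℝ)⁻¹ • ∑ k : Fin n, Yi' k ω • ![Ai' k ω, Aj' k ω])
    (L : Ω → (Fin 2 → ℝ) → ℝ)
    (hL : ∀ ω w, L ω w = (n : ℝ)⁻¹ *
      ∑ k : Fin n, (Yi' k ω - w 0 * Ai' k ω - w 1 * Aj' k ω)^2) :
    ∀ᵐ ω ∂P, IsUnit (Sighat ω) ∧
      (∀ w : Fin 2 → ℝ, (∀ u : Fin 2 → ℝ, L ω w ≤ L ω u) ↔
        w = (Sighat ω)⁻¹.mulVec (vhat ω)) ∧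
      ((Sighat ω)⁻¹.mulVec (vhat ω)) 1 ≠ 0 := by
  set v : NNReal := ⟨σ ^ 2, sq_nonneg σ⟩
  set ν := P.map fun ω => (Yi ω, S ω)
  have hν : ∀ᵐ d ∂ν, d.1 ≠ 0 :=
    (ae_map_iff (by fun_prop) (measurableSet_eq_fun measurable_fst measurable_const).compl).mpr
      (.of_forall fun ω => by rcases hYval ω with h | h <;> simp [h])
  have hmodel : P.map (fun ω => (a * Yi ω + εi ω, b * (S ω * Yi ω) + εj ω, Yi ω)) =
      (ν.prod ((P.map εi).prod (P.map εj))).map (twoTaskSample a b) := by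
    rw [← hindep.map_prodMk_prodMk_eq_prod hYim hSm hεim hεjm,
      Measure.map_map (measurable_twoTaskSample a b) (by fun_prop)]
    rfl
  have hsample : P.map (fun ω k => (Ai' k ω, Aj' k ω, Yi' k ω)) = Measure.pi fun _ =>
      (ν.prod ((gaussianReal 0 v).prod (gaussianReal 0 v))).map (twoTaskSample a b) := by
    rw [hiid_indep.map_fun_eq_pi_map fun k => by fun_prop]
    simp only [hiid_law, hmodel, hεi, hεj]
  have hγ := gaussianReal_absolutelyContinuous 0
    (ne_of_gt (show (0 : ℝ) < σ ^ 2 by positivity) : v ≠ 0)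
  have hnull := pi_map_twoTaskSample_degenerate_eq_zero hn a b hν hγ
  rw [← hsample, Measure.map_apply (by fun_prop)
    measurableSet_setOf_leastSquaresDegeneracy_eq_zero] at hnull
  filter_upwards [measure_eq_zero_iff_ae_notMem.mp hnull] with ω hω
  exact empirical_leastSquares_of_degeneracy_ne_zero (by omega) _ _ _ hω
    _ (hSighat ω) _ (hvhat ω) _ (hL ω)

/-- (Theorem 1, finite-sample part.) In the two-task Gaussian model with any `ρ ∈ [0,1]`
(in particular `ρ = 1/2`), for any `n ≥ 2` and i.i.d. copies `(A^i_k, A^j_k, Y_{i,k})` of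
`(A^i, A^j, Y_i)`, almost surely the empirical Gram matrix `Σ̂` is invertible and the unique
empirical least-squares minimizer `(ŵ₁, ŵ₂) = Σ̂⁻¹ v̂` places nonzero weight on the
non-causal feature: `ŵ₂ ≠ 0`. -/
theorem stmt_14
    {Ω : Type*} [MeasurableSpace Ω] (P : Measure Ω) [IsProbabilityMeasure P]
    (Yi S εi εj : Ω → ℝ)
    (hYim : Measurable Yi) (hSm : Measurable S)
    (hεim : Measurable εi) (hεjm : Measurable εj)
    (ρ σ a b : ℝ) (hρ : ρ ∈ Set.Icc (0 : ℝ) 1) (hσ : 0 < σ) (ha : a ≠ 0) (hb : b ≠ 0)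
    (hindep : iIndepFun ![Yi, S, εi, εj] P)
    (hYval : ∀ ω, Yi ω = 1 ∨ Yi ω = -1)
    (hY : P {ω | Yi ω = 1} = 1/2)
    (hSval : ∀ ω, S ω = 1 ∨ S ω = -1)
    (hS : P {ω | S ω = 1} = ENNReal.ofReal ρ)
    (hεi : Measure.map εi P = gaussianReal 0 ⟨σ^2, sq_nonneg σ⟩)
    (hεj : Measure.map εj P = gaussianReal 0 ⟨σ^2, sq_nonneg σ⟩)
    (n : ℕ) (hn : 2 ≤ n)
    (Ai' Aj' Yi' : Fin n → Ω → ℝ)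
    (hAi'm : ∀ k, Measurable (Ai' k)) (hAj'm : ∀ k, Measurable (Aj' k))
    (hYi'm : ∀ k, Measurable (Yi' k))
    (hiid_indep : iIndepFun
      (fun k ω => (Ai' k ω, Aj' k ω, Yi' k ω)) P)
    (hiid_law : ∀ k, Measure.map (fun ω => (Ai' k ω, Aj' k ω, Yi' k ω)) P
      = Measure.map (fun ω => (a * Yi ω + εi ω, b * (S ω * Yi ω) + εj ω, Yi ω)) P)
    (Sighat : Ω → Matrix (Fin 2) (Fin 2) ℝ)
    (hSighat : ∀ ω, Sighat ω = (n : ℝ)⁻¹ •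
      ∑ k : Fin n, Matrix.of fun p q : Fin 2 =>
        ![Ai' k ω, Aj' k ω] p * ![Ai' k ω, Aj' k ω] q)
    (vhat : Ω → Fin 2 → ℝ)
    (hvhat : ∀ ω, vhat ω = (n : ℝ)⁻¹ • ∑ k : Fin n, Yi' k ω • ![Ai' k ω, Aj' k ω])
    (L : Ω → (Fin 2 → ℝ) → ℝ)
    (hL : ∀ ω w, L ω w = (n : ℝ)⁻¹ *
      ∑ k : Fin n, (Yi' k ω - w 0 * Ai' k ω - w 1 * Aj' k ω)^2) :
    ∀ᵐ ω ∂P, IsUnit (Sighat ω) ∧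
      (∀ w : Fin 2 → ℝ, (∀ u : Fin 2 → ℝ, L ω w ≤ L ω u) ↔
        w = (Sighat ω)⁻¹.mulVec (vhat ω)) ∧
      ((Sighat ω)⁻¹.mulVec (vhat ω)) 1 ≠ 0 :=
  stmt_14_general P Yi S εi εj hYim hSm hεim hεjm σ a b hσ hindep hYval hεi hεj n hn Ai' Aj' Yi'
    hAi'm hAj'm hYi'm hiid_indep hiid_law Sighat hSighat vhat hvhat L hL
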